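/- For the generalized Cantor ladder, E(λ) = H(λ)λ^α e^λ + O(1) as λ → ∞, where η = 1/ρ_m, α = log_η Δ_{2m−1} < 0, and H(λ) = Φ(log_η λ) for some 1-periodic function Φ. -/

import Mathlib

/-!
Splitting `[0, 1]` at the left end `A` of the last step and rescaling that step gives
`E(μ) = S(μ) + Δ e^{(1-ρ)μ} E(ρμ)` with `Δ = 1 - A`, `ρ = ρ_m` and `S(μ) = ∫_0^A e^{μC}`.
Self-similarity bounds `C` by `1 - ρ` on `[0, A]`, so `S(μ) ≤ e^{(1-ρ)μ}`. With `η = 1/ρ` the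
series `R(μ) = ∑_{j ≥ 1} Δ^{-j} e^{(1-η^j)μ} S(η^j μ)` converges, is bounded for `μ ≥ 1`
(its terms decay like `Δ^{-j} e^{-η^j}`), and `E + R` solves the homogeneous equation
`W(ημ) = Δ e^{(η-1)μ} W(μ)`. Every such `W` equals `Φ(log_η λ) λ^α e^λ` with `Φ` 1-periodic.
-/

open Set Finset Filter Asymptotics Real Topology

lemma summable_pow_mul_exp_neg_mul_pow {η c : ℝ} (q : ℝ) (hη : 1 < η) (hc : 0 < c) :
    Summable fun j : ℕ => q ^ j * exp (-(c * η ^ j)) := by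
  have hratio : Tendsto (fun j : ℕ => |q| * exp (-(c * (η - 1)) * η ^ j)) atTop (𝓝 0) := by
    have h := (tendsto_pow_atTop_atTop_of_one_lt hη).const_mul_atTop_of_neg
      (neg_neg_of_pos (mul_pos hc (sub_pos.2 hη)))
    simpa using (tendsto_exp_atBot.comp h).const_mul |q|
  refine summable_of_ratio_norm_eventually_le (r := 1 / 2) (by norm_num) ?_
  filter_upwards [hratio.eventually_lt_const (by norm_num : (0:ℝ) < 1 / 2)] with j hj
  have hexp : exp (-(c * η ^ (j + 1))) = exp (-(c * (η - 1)) * η ^ j) * exp (-(c * η ^ j)) := by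
    rw [← exp_add]; ring_nf
  calc ‖q ^ (j + 1) * exp (-(c * η ^ (j + 1)))‖
      = |q| * exp (-(c * (η - 1)) * η ^ j) * ‖q ^ j * exp (-(c * η ^ j))‖ := by
        rw [hexp]; simp only [norm_mul, norm_pow, norm_eq_abs, abs_exp, pow_succ]; ring
    _ ≤ 1 / 2 * ‖q ^ j * exp (-(c * η ^ j))‖ := by gcongr

section Correction

variable {η Δ : ℝ} {S : ℝ → ℝ}

noncomputable def correctionTerm (η Δ : ℝ) (S : ℝ → ℝ) (j : ℕ) (μ : ℝ) : ℝ :=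
  Δ⁻¹ ^ j * exp ((1 - η ^ j) * μ) * S (η ^ j * μ)

noncomputable def correction (η Δ : ℝ) (S : ℝ → ℝ) (μ : ℝ) : ℝ :=
  ∑' j : ℕ, correctionTerm η Δ S (j + 1) μ

lemma mul_correctionTerm_succ (hΔ : Δ ≠ 0) (j : ℕ) (μ : ℝ) :
    Δ * exp ((η - 1) * μ) * correctionTerm η Δ S (j + 1) μ = correctionTerm η Δ S j (η * μ) := by
  have hexp : exp ((η - 1) * μ) * exp ((1 - η ^ (j + 1)) * μ) = exp ((1 - η ^ j) * (η * μ)) := by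
    rw [← exp_add]; ring_nf
  simp only [correctionTerm, ← hexp, pow_succ, inv_pow]
  field_simp

lemma abs_correctionTerm_succ_le (hη : 0 < η) (hΔ : 0 < Δ)
    (hS : ∀ μ > 0, |S (η * μ)| ≤ exp ((η - 1) * μ)) (j : ℕ) {μ : ℝ} (hμ : 0 < μ) :
    |correctionTerm η Δ S (j + 1) μ| ≤ Δ⁻¹ ^ (j + 1) * exp ((1 - η ^ j) * μ) := by
  have hexp :
      exp ((1 - η ^ (j + 1)) * μ) * exp ((η - 1) * (η ^ j * μ)) = exp ((1 - η ^ j) * μ) := by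
    rw [← exp_add]; ring_nf
  rw [correctionTerm, abs_mul, abs_mul, abs_of_pos (by positivity), abs_exp, mul_assoc, ← hexp,
    pow_succ' η, mul_assoc η]
  gcongr
  exact hS _ (by positivity)

variable (hη : 1 < η) (hΔ : 0 < Δ) (hS : ∀ μ > 0, |S (η * μ)| ≤ exp ((η - 1) * μ))
include hη hΔ hS

lemma summable_correctionTerm_succ {μ : ℝ} (hμ : 0 < μ) :
    Summable fun j : ℕ => correctionTerm η Δ S (j + 1) μ := by
  have hmaj : Summable fun j : ℕ => Δ⁻¹ ^ (j + 1) * exp ((1 - η ^ j) * μ) := by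
    refine ((summable_pow_mul_exp_neg_mul_pow Δ⁻¹ hη hμ).mul_left (Δ⁻¹ * exp μ)).congr fun j => ?_
    rw [pow_succ, show (1 - η ^ j) * μ = μ + -(μ * η ^ j) by ring, exp_add]; ring
  exact .of_norm_bounded hmaj fun j => abs_correctionTerm_succ_le (by linarith) hΔ hS j hμ

lemma mul_correction {μ : ℝ} (hμ : 0 < μ) :
    Δ * exp ((η - 1) * μ) * correction η Δ S μ = S (η * μ) + correction η Δ S (η * μ) := by
  have hημ : 0 < η * μ := by nlinarith
  have hsum : Summable fun j : ℕ => correctionTerm η Δ S j (η * μ) :=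
    (summable_nat_add_iff 1).1 (summable_correctionTerm_succ hη hΔ hS hημ)
  calc Δ * exp ((η - 1) * μ) * correction η Δ S μ
      = ∑' j : ℕ, correctionTerm η Δ S j (η * μ) := by
        rw [correction, ← tsum_mul_left]
        exact tsum_congr fun j => mul_correctionTerm_succ hΔ.ne' j μ
    _ = S (η * μ) + correction η Δ S (η * μ) := by
        rw [hsum.tsum_eq_zero_add, correction, correctionTerm]
        simp

lemma correction_isBigO_one : correction η Δ S =O[atTop] fun _ => (1 : ℝ) := by
  have hmaj : Summable fun j : ℕ => Δ⁻¹ ^ (j + 1) * exp ((1 - η ^ j) * 1) := by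
    refine ((summable_pow_mul_exp_neg_mul_pow Δ⁻¹ hη one_pos).mul_left (Δ⁻¹ * exp 1)).congr
      fun j => ?_
    rw [pow_succ, show (1 - η ^ j) * 1 = 1 + -(1 * η ^ j) by ring, exp_add]; ring
  refine .of_bound (∑' j : ℕ, Δ⁻¹ ^ (j + 1) * exp ((1 - η ^ j) * 1)) ?_
  filter_upwards [eventually_ge_atTop 1] with μ hμ
  rw [norm_one, mul_one]
  refine tsum_of_norm_bounded hmaj.hasSum fun j => ?_
  calc ‖correctionTerm η Δ S (j + 1) μ‖ ≤ Δ⁻¹ ^ (j + 1) * exp ((1 - η ^ j) * μ) :=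
        abs_correctionTerm_succ_le (by linarith) hΔ hS j (by linarith)
    _ ≤ Δ⁻¹ ^ (j + 1) * exp ((1 - η ^ j) * 1) := by
        have hηj : 1 ≤ η ^ j := one_le_pow₀ hη.le
        refine mul_le_mul_of_nonneg_left (exp_le_exp.2 ?_) (by positivity)
        nlinarith

end Correction

lemma exists_periodic_of_scaling {η Δ : ℝ} {V : ℝ → ℝ} (hη₀ : 0 < η) (hη₁ : η ≠ 1) (hΔ : 0 < Δ)
    (hV : ∀ μ > 0, V (η * μ) = Δ * V μ) :
    ∃ Φ : ℝ → ℝ, (∀ x, Φ (x + 1) = Φ x) ∧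
      ∀ lam > 0, V lam = Φ (log lam / log η) * lam ^ (log Δ / log η) := by
  refine ⟨fun x => V (η ^ x) * Δ ^ (-x), fun x => ?_, fun lam hlam => ?_⟩
  · dsimp only
    rw [rpow_add hη₀, rpow_one, mul_comm (η ^ x), hV _ (rpow_pos_of_pos hη₀ x), neg_add,
      rpow_add hΔ, rpow_neg_one]
    field_simp
  · have hlogη : log η ≠ 0 := log_ne_zero_of_pos_of_ne_one hη₀ hη₁
    have hpow : η ^ (log lam / log η) = lam := by
      rw [rpow_def_of_pos hη₀, mul_div_cancel₀ _ hlogη, exp_log hlam]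
    have hΔpow : lam ^ (log Δ / log η) = Δ ^ (log lam / log η) := by
      rw [rpow_def_of_pos hlam, rpow_def_of_pos hΔ]; ring_nf
    dsimp only
    rw [hpow, hΔpow, mul_assoc, ← rpow_add hΔ, neg_add_cancel, rpow_zero, mul_one]

theorem exists_periodic_isBigO_of_functional_eq {ρ Δ : ℝ} {E S : ℝ → ℝ} (hρ₀ : 0 < ρ)
    (hρ₁ : ρ < 1) (hΔ : 0 < Δ) (hE : ∀ μ > 0, E μ = S μ + Δ * exp ((1 - ρ) * μ) * E (ρ * μ))
    (hS : ∀ μ > 0, |S μ| ≤ exp ((1 - ρ) * μ)) :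
    ∃ Φ : ℝ → ℝ, (∀ x, Φ (x + 1) = Φ x) ∧
      (fun lam => E lam - Φ (log lam / log (1 / ρ)) * lam ^ (log Δ / log (1 / ρ)) * exp lam)
        =O[atTop] fun _ => (1 : ℝ) := by
  have hρη : ∀ μ, ρ * (1 / ρ * μ) = μ := fun μ => by field_simp
  have hρη' : ∀ μ, (1 - ρ) * (1 / ρ * μ) = (1 / ρ - 1) * μ := fun μ => by field_simp
  set η := 1 / ρ
  have hη : 1 < η := one_lt_one_div hρ₀ hρ₁
  have hS' : ∀ μ > 0, |S (η * μ)| ≤ exp ((η - 1) * μ) := fun μ hμ => by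
    rw [← hρη']; exact hS _ (by positivity)
  set W := fun μ => E μ + correction η Δ S μ
  have hW : ∀ μ > 0, W (η * μ) = Δ * exp ((η - 1) * μ) * W μ := fun μ hμ => by
    simp only [W]
    rw [hE _ (by positivity), hρη, hρη', mul_add, mul_correction hη hΔ hS' hμ]
    ring
  obtain ⟨Φ, hΦ, hV⟩ := exists_periodic_of_scaling (V := fun μ => W μ * exp (-μ))
    (by positivity) hη.ne' hΔ fun μ hμ => by
      have hexp : exp ((η - 1) * μ) * exp (-(η * μ)) = exp (-μ) := by rw [← exp_add]; ring_nf
      change W (η * μ) * exp (-(η * μ)) = Δ * (W μ * exp (-μ))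
      rw [hW μ hμ]
      linear_combination Δ * W μ * hexp
  refine ⟨Φ, hΦ, (correction_isBigO_one hη hΔ hS').neg_left.congr' ?_ .rfl⟩
  filter_upwards [eventually_gt_atTop 0] with lam hlam
  rw [← hV lam hlam, mul_assoc, ← exp_add, neg_add_cancel, exp_zero, mul_one]
  simp only [W]; ring

lemma sub_div_sub_mem_Icc_zero_one {x y t : ℝ} (hxy : x < y) (ht : t ∈ Icc x y) :
    (t - x) / (y - x) ∈ Icc (0 : ℝ) 1 :=
  ⟨div_nonneg (sub_nonneg.2 ht.1) (sub_pos.2 hxy).le,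
    (div_le_one (sub_pos.2 hxy)).2 (sub_le_sub_right ht.2 x)⟩

lemma exists_mem_Icc_step_or_gap (a b : ℕ → ℝ) (N : ℕ) {t : ℝ} (ht : t ∈ Icc (a 0) (a (N + 1))) :
    ∃ k ≤ N, t ∈ Icc (a k) (b k) ∨ t ∈ Icc (b k) (a (k + 1)) := by
  induction N with
  | zero => exact ⟨0, le_rfl, Icc_subset_Icc_union_Icc ht⟩
  | succ N ih =>
    by_cases hN : t ≤ a (N + 1)
    · obtain ⟨k, hk, hmem⟩ := ih ⟨ht.1, hN⟩
      exact ⟨k, hk.trans N.le_succ, hmem⟩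
    · exact ⟨N + 1, le_rfl, Icc_subset_Icc_union_Icc ⟨(not_le.1 hN).le, ht.2⟩⟩

/-- Steps are indexed by `0, …, m - 1`: the paper's last step `[a_m, b_m]` with weight `ρ_m` is
`[a (m - 1), b (m - 1)]` with weight `ρ (m - 1)`. -/
structure IsCantorLadder (m : ℕ) (a b ρ : ℕ → ℝ) (C : ℝ → ℝ) : Prop where
  two_le : 2 ≤ m
  a_zero : a 0 = 0
  b_last : b (m - 1) = 1
  a_lt_b : ∀ k < m, a k < b k
  b_le_a_succ : ∀ k, k + 1 < m → b k ≤ a (k + 1)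
  rho_pos : ∀ k < m, 0 < ρ k
  sum_rho : ∑ j ∈ Finset.range m, ρ j = 1
  continuousOn : ContinuousOn C (Icc 0 1)
  step : ∀ k < m, ∀ t ∈ Icc (a k) (b k),
    C t = (∑ j ∈ Finset.range k, ρ j) + ρ k * C ((t - a k) / (b k - a k))
  gap : ∀ k, k + 1 < m → ∀ t ∈ Icc (b k) (a (k + 1)), C t = ∑ j ∈ Finset.range (k + 1), ρ j

namespace IsCantorLadder

variable {m : ℕ} {a b ρ : ℕ → ℝ} {C : ℝ → ℝ} (hL : IsCantorLadder m a b ρ C)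
include hL

lemma sum_range_mono {k l : ℕ} (hkl : k ≤ l) (hl : l ≤ m) :
    ∑ j ∈ Finset.range k, ρ j ≤ ∑ j ∈ Finset.range l, ρ j :=
  Finset.sum_le_sum_of_subset_of_nonneg (Finset.range_subset_range.2 hkl) fun j hj _ =>
    (hL.rho_pos j ((Finset.mem_range.1 hj).trans_le hl)).le

lemma sum_range_le_one {k : ℕ} (hk : k ≤ m) : ∑ j ∈ Finset.range k, ρ j ≤ 1 :=
  hL.sum_rho ▸ hL.sum_range_mono hk le_rfl

lemma sum_range_last : ∑ j ∈ Finset.range (m - 1), ρ j = 1 - ρ (m - 1) := by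
  have hm : m = m - 1 + 1 := by have := hL.two_le; omega
  rw [eq_sub_iff_add_eq, ← Finset.sum_range_succ, ← hm, hL.sum_rho]

lemma rho_lt_one {k : ℕ} (hk : k < m) : ρ k < 1 := by
  have hm := hL.two_le
  obtain ⟨j, hj, hjk⟩ : ∃ j < m, j ≠ k := by
    rcases k with _ | k
    · exact ⟨1, by omega, one_ne_zero⟩
    · exact ⟨0, by omega, (Nat.succ_ne_zero k).symm⟩
  rw [← hL.sum_rho]
  exact Finset.single_lt_sum hjk (Finset.mem_range.2 hk) (Finset.mem_range.2 hj) (hL.rho_pos j hj)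
    fun i hi _ => (hL.rho_pos i (Finset.mem_range.1 hi)).le

lemma a_nonneg {k : ℕ} (hk : k < m) : 0 ≤ a k := by
  induction k with
  | zero => exact hL.a_zero.ge
  | succ k ih =>
    linarith [ih (by omega), hL.a_lt_b k (by omega), hL.b_le_a_succ k hk]

lemma a_last_pos : 0 < a (m - 1) := by
  have hm := hL.two_le
  have hlast : m - 2 + 1 = m - 1 := by omega
  have := hL.b_le_a_succ (m - 2) (by omega)
  rw [hlast] at this
  linarith [hL.a_nonneg (k := m - 2) (by omega), hL.a_lt_b (m - 2) (by omega)]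

lemma exists_mem_step_or_gap_of_mem_Icc_a_last {t : ℝ} (ht : t ∈ Icc 0 (a (m - 1))) :
    ∃ k, k + 1 < m ∧ (t ∈ Icc (a k) (b k) ∨ t ∈ Icc (b k) (a (k + 1))) := by
  have hm := hL.two_le
  have hmem : t ∈ Icc (a 0) (a (m - 2 + 1)) := by
    rwa [hL.a_zero, show m - 2 + 1 = m - 1 by omega]
  obtain ⟨k, hk, hmem_k⟩ := exists_mem_Icc_step_or_gap a b (m - 2) hmem
  exact ⟨k, by omega, hmem_k⟩

lemma exists_mem_step_or_gap {t : ℝ} (ht : t ∈ Icc (0 : ℝ) 1) :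
    ∃ k < m, t ∈ Icc (a k) (b k) ∨ (k + 1 < m ∧ t ∈ Icc (b k) (a (k + 1))) := by
  by_cases hlast : t ≤ a (m - 1)
  · obtain ⟨k, hk, hstep | hgap⟩ := hL.exists_mem_step_or_gap_of_mem_Icc_a_last ⟨ht.1, hlast⟩
    · exact ⟨k, by omega, .inl hstep⟩
    · exact ⟨k, by omega, .inr ⟨hk, hgap⟩⟩
  · have hm := hL.two_le
    exact ⟨m - 1, by omega, .inl ⟨(not_le.1 hlast).le, hL.b_last ▸ ht.2⟩⟩

lemma le_of_mem_step {k : ℕ} (hk : k < m) {M : ℝ} (hM : ∀ u ∈ Icc (0 : ℝ) 1, C u ≤ M) {t : ℝ}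
    (ht : t ∈ Icc (a k) (b k)) : C t ≤ (∑ j ∈ Finset.range k, ρ j) + ρ k * M := by
  rw [hL.step k hk t ht]
  gcongr
  · exact (hL.rho_pos k hk).le
  · exact hM _ (sub_div_sub_mem_Icc_zero_one (hL.a_lt_b k hk) ht)

lemma le_one {t : ℝ} (ht : t ∈ Icc (0 : ℝ) 1) : C t ≤ 1 := by
  obtain ⟨t₀, ht₀, hmax⟩ :=
    isCompact_Icc.exists_isMaxOn (nonempty_Icc.2 zero_le_one) hL.continuousOn
  suffices C t₀ ≤ 1 from (hmax ht).trans this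
  obtain ⟨k, hk, hstep | ⟨hk1, hgap⟩⟩ := hL.exists_mem_step_or_gap ht₀
  · have hC := hL.le_of_mem_step hk (fun u hu => hmax hu) hstep
    have hsum := hL.sum_range_le_one (Nat.succ_le_of_lt hk)
    rw [Finset.sum_range_succ] at hsum
    have hscaled : (1 - ρ k) * C t₀ ≤ (1 - ρ k) * 1 := by linarith
    exact le_of_mul_le_mul_left hscaled (sub_pos.2 (hL.rho_lt_one hk))
  · exact hL.gap k hk1 t₀ hgap ▸ hL.sum_range_le_one hk1.le

lemma le_one_sub_rho_last {t : ℝ} (ht : t ∈ Icc 0 (a (m - 1))) : C t ≤ 1 - ρ (m - 1) := by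
  rw [← hL.sum_range_last]
  obtain ⟨k, hk, hstep | hgap⟩ := hL.exists_mem_step_or_gap_of_mem_Icc_a_last ht
  · have hC := hL.le_of_mem_step (by omega) (fun u hu => hL.le_one hu) hstep
    rw [mul_one, ← Finset.sum_range_succ] at hC
    exact hC.trans (hL.sum_range_mono (by omega) (by omega))
  · exact hL.gap k hk t hgap ▸ hL.sum_range_mono (by omega) (by omega)

lemma intervalIntegrable_exp_mul {μ x y : ℝ} (hx : x ∈ Icc (0 : ℝ) 1) (hy : y ∈ Icc (0 : ℝ) 1) :
    IntervalIntegrable (fun t => exp (μ * C t)) MeasureTheory.volume x y :=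
  ((continuousOn_const.mul hL.continuousOn).rexp.mono (uIcc_subset_Icc hx hy)).intervalIntegrable

lemma integral_step {k : ℕ} (hk : k < m) (μ : ℝ) :
    ∫ t in a k..b k, exp (μ * C t) =
      (b k - a k) * exp ((∑ j ∈ Finset.range k, ρ j) * μ) *
        ∫ t in (0 : ℝ)..1, exp (ρ k * μ * C t) := by
  have hlen : b k - a k ≠ 0 := (sub_pos.2 (hL.a_lt_b k hk)).ne'
  have hcongr : ∀ t ∈ uIcc (a k) (b k), exp (μ * C t) =
      exp ((∑ j ∈ Finset.range k, ρ j) * μ) *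
        (fun u => exp (ρ k * μ * C u)) ((t - a k) / (b k - a k)) := by
    intro t ht
    rw [uIcc_of_le (hL.a_lt_b k hk).le] at ht
    rw [hL.step k hk t ht, ← exp_add]
    ring_nf
  rw [intervalIntegral.integral_congr hcongr, intervalIntegral.integral_const_mul,
    intervalIntegral.integral_comp_sub_right
      (fun s => (fun u => exp (ρ k * μ * C u)) (s / (b k - a k))),
    intervalIntegral.integral_comp_div (fun u => exp (ρ k * μ * C u)) hlen, sub_self, zero_div,
    div_self hlen, smul_eq_mul]
  ring

lemma integral_functional_eq (μ : ℝ) :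
    ∫ t in (0 : ℝ)..1, exp (μ * C t) =
      (∫ t in (0 : ℝ)..a (m - 1), exp (μ * C t)) +
        (b (m - 1) - a (m - 1)) * exp ((1 - ρ (m - 1)) * μ) *
          ∫ t in (0 : ℝ)..1, exp (ρ (m - 1) * μ * C t) := by
  have hm := hL.two_le
  have ha : a (m - 1) ∈ Icc (0 : ℝ) 1 :=
    ⟨hL.a_last_pos.le, hL.b_last ▸ (hL.a_lt_b (m - 1) (by omega)).le⟩
  have hzero : (0 : ℝ) ∈ Icc (0 : ℝ) 1 := ⟨le_rfl, zero_le_one⟩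
  have hone : (1 : ℝ) ∈ Icc (0 : ℝ) 1 := ⟨zero_le_one, le_rfl⟩
  rw [← hL.sum_range_last, ← hL.integral_step (by omega), hL.b_last,
    intervalIntegral.integral_add_adjacent_intervals (hL.intervalIntegrable_exp_mul hzero ha)
      (hL.intervalIntegrable_exp_mul ha hone)]

lemma abs_integral_zero_a_last_le {μ : ℝ} (hμ : 0 ≤ μ) :
    |∫ t in (0 : ℝ)..a (m - 1), exp (μ * C t)| ≤ exp ((1 - ρ (m - 1)) * μ) := by
  have hm := hL.two_le
  have ha := hL.a_last_pos
  have ha1 : a (m - 1) ≤ 1 := hL.b_last ▸ (hL.a_lt_b (m - 1) (by omega)).le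
  calc |∫ t in (0 : ℝ)..a (m - 1), exp (μ * C t)|
      ≤ exp ((1 - ρ (m - 1)) * μ) * |a (m - 1) - 0| := by
        refine intervalIntegral.norm_integral_le_of_norm_le_const
          (f := fun t => exp (μ * C t)) fun t ht => ?_
        rw [uIoc_of_le ha.le] at ht
        rw [norm_eq_abs, abs_exp, mul_comm (1 - ρ (m - 1))]
        exact exp_le_exp.2 (mul_le_mul_of_nonneg_left
          (hL.le_one_sub_rho_last ⟨ht.1.le, ht.2⟩) hμ)
    _ ≤ exp ((1 - ρ (m - 1)) * μ) := by
        rw [sub_zero, abs_of_pos ha]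
        exact mul_le_of_le_one_right (exp_pos _).le ha1

end IsCantorLadder

/-- For the generalized Cantor ladder, `E(λ) = H(λ) λ^α e^λ + O(1)` as
`λ → ∞`, where `η = 1/ρ_m`, `α = log_η Δ_{2m-1} < 0`, and `H(λ) = Φ(log_η λ)`
for a `1`-periodic function `Φ`. Steps are indexed by `k = 0, …, m-1`. -/
theorem cantorLadder_E_first_term
    (m : ℕ) (a b ρ : ℕ → ℝ) (C : ℝ → ℝ)
    (hm : 2 ≤ m)
    (ha0 : a 0 = 0) (hbm : b (m - 1) = 1)
    (hab : ∀ k < m, a k < b k)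
    (horder : ∀ k, k + 1 < m → b k ≤ a (k + 1))
    (hρpos : ∀ k < m, 0 < ρ k)
    (hρsum : ∑ j ∈ Finset.range m, ρ j = 1)
    (hcont : ContinuousOn C (Set.Icc 0 1))
    (hstep : ∀ k < m, ∀ t ∈ Set.Icc (a k) (b k),
      C t = (∑ j ∈ Finset.range k, ρ j) + ρ k * C ((t - a k) / (b k - a k)))
    (hgap : ∀ k, k + 1 < m → ∀ t ∈ Set.Icc (b k) (a (k + 1)),
      C t = ∑ j ∈ Finset.range (k + 1), ρ j) :
    Real.log (b (m - 1) - a (m - 1)) / Real.log (1 / ρ (m - 1)) < 0 ∧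
    ∃ Φ : ℝ → ℝ, (∀ x, Φ (x + 1) = Φ x) ∧
      (fun lam => (∫ t in (0:ℝ)..1, Real.exp (lam * C t)) -
          Φ (Real.log lam / Real.log (1 / ρ (m - 1))) *
            lam ^ (Real.log (b (m - 1) - a (m - 1)) / Real.log (1 / ρ (m - 1))) *
            Real.exp lam)
        =O[atTop] fun _ => (1 : ℝ) := by
  have hL : IsCantorLadder m a b ρ C :=
    ⟨hm, ha0, hbm, hab, horder, hρpos, hρsum, hcont, hstep, hgap⟩
  have hρ₀ : 0 < ρ (m - 1) := hρpos _ (by omega)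
  have hρ₁ : ρ (m - 1) < 1 := hL.rho_lt_one (by omega)
  have hΔ₀ : 0 < b (m - 1) - a (m - 1) := sub_pos.2 (hab _ (by omega))
  have hΔ₁ : b (m - 1) - a (m - 1) < 1 := by linarith [hL.a_last_pos]
  exact ⟨div_neg_of_neg_of_pos (log_neg hΔ₀ hΔ₁) (log_pos (one_lt_one_div hρ₀ hρ₁)),
    exists_periodic_isBigO_of_functional_eq hρ₀ hρ₁ hΔ₀ (fun μ _ => hL.integral_functional_eq μ)
      fun μ hμ => hL.abs_integral_zero_a_last_le hμ.le⟩
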